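/- arXiv:2511.15955 — 3 statements merged into one kernel-verified Lean document; each statement's English description precedes it below -/
import Mathlib

section
/- Let n ≥ 2 and let K and K_i (i ∈ ℕ) be compact convex subsets of Euclidean space ℝⁿ, each with nonempty interior. If the Hausdorff distance between K_i and K tends to 0 as i → ∞, then the (n−1)-dimensional Hausdorff measures of the boundaries converge: μH^{n−1}(frontier K_i) → μH^{n−1}(frontier K). -/
/-!
Fix a ball `closedBall x₀ r ⊆ K` and let `δ = d_H(Kᵢ, K)`. Since `K` is convex and contains the
ball, every point of the `δ`-neighbourhood of `K` lies in the homothetic copy of `K` of ratio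
`(r + δ) / r` about `x₀`; likewise `Kᵢ` contains the ball of radius `r - δ` about `x₀`, so `K` lies
in the copy of `Kᵢ` of ratio `r / (r - δ)`. Surface area is monotone under inclusion of convex
bodies, because the nearest-point map onto the inner body is `1`-Lipschitz and maps the outer
boundary onto the inner one (follow the outer normal ray from a boundary point of the inner body
until it leaves the outer body), and it scales by `λ ^ (n - 1)` under a homothety of ratio `λ`.
Both ratios tend to `1`.
-/

open MeasureTheory Metric Filter RealInnerProductSpace AffineMap
open scoped NNReal ENNReal Pointwise Topology

theorem exists_dist_le_hausdorffDist_of_mem {X : Type*} [PseudoMetricSpace X] {s t : Set X}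
    (hs : Bornology.IsBounded s) (ht : IsCompact t) (ht' : t.Nonempty) {x : X} (hx : x ∈ s) :
    ∃ y ∈ t, dist x y ≤ hausdorffDist s t := by
  obtain ⟨y, hy, hxy⟩ := ht.exists_infDist_eq_dist ht' x
  exact ⟨y, hy, hxy ▸ infDist_le_hausdorffDist_of_mem hx
    (hausdorffEDist_ne_top_of_nonempty_of_bounded ⟨x, hx⟩ ht' hs ht.isBounded)⟩

theorem ENNReal.tendsto_of_le_smul_of_le_smul {ι : Type*} {l : Filter ι} {x : ι → ℝ≥0∞}
    {a : ℝ≥0∞} {b c : ι → ℝ≥0} (hb : Tendsto b l (𝓝 1)) (hc : Tendsto c l (𝓝 1))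
    (hlow : ∀ᶠ i in l, a ≤ b i • x i) (hup : ∀ᶠ i in l, x i ≤ c i • a) :
    Tendsto x l (𝓝 a) := by
  have hlim_low : Tendsto (fun i => a / b i) l (𝓝 a) := by
    simpa using ENNReal.Tendsto.const_div (ENNReal.tendsto_coe.2 hb) (Or.inl ENNReal.one_ne_top)
  have hlim_up : Tendsto (fun i => c i • a) l (𝓝 a) := by
    simpa [ENNReal.smul_def] using
      ENNReal.Tendsto.mul_const (ENNReal.tendsto_coe.2 hc) (b := a) (Or.inl one_ne_zero)
  refine tendsto_of_tendsto_of_tendsto_of_le_of_le' hlim_low hlim_up ?_ hup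
  filter_upwards [hlow] with i hi
  exact ENNReal.div_le_of_le_mul (by simpa [mul_comm, ENNReal.smul_def] using hi)

theorem Filter.Tendsto.nnnorm_rpow_of_tendsto_one {ι : Type*} {l : Filter ι} {f : ι → ℝ}
    (hf : Tendsto f l (𝓝 1)) {d : ℝ} (hd : 0 ≤ d) : Tendsto (fun i => ‖f i‖₊ ^ d) l (𝓝 1) := by
  simpa [Function.comp_def] using
    (((NNReal.continuous_rpow_const hd).comp continuous_nnnorm).tendsto 1).comp hf

section NormedSpace

variable {F : Type*} [NormedAddCommGroup F] [NormedSpace ℝ F]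

theorem IsCompact.exists_add_smul_mem_frontier {L : Set F} (hL : IsCompact L) {x ν : F}
    (hx : x ∈ L) (hν : ν ≠ 0) :
    ∃ t : ℝ, 0 ≤ t ∧ x + t • ν ∈ frontier L := by
  have hray : Continuous fun t : ℝ => x + t • ν := by fun_prop
  set S := Set.Ici (0 : ℝ) ∩ (fun t : ℝ => x + t • ν) ⁻¹' L
  have hS_bdd : S ⊆ Set.Icc 0 (diam L / ‖ν‖) := fun t ⟨ht, htL⟩ => by
    refine ⟨ht, (le_div_iff₀ (norm_pos_iff.2 hν)).2 ?_⟩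
    have := dist_le_diam_of_mem hL.isBounded htL hx
    rwa [dist_eq_norm, add_sub_cancel_left, norm_smul, Real.norm_of_nonneg ht] at this
  have hS : IsCompact S := isCompact_Icc.of_isClosed_subset
    (isClosed_Ici.inter (hL.isClosed.preimage hray)) hS_bdd
  obtain ⟨t, ⟨ht, htL⟩, htmax⟩ := hS.exists_isGreatest ⟨0, Set.self_mem_Ici, by simpa using hx⟩
  refine ⟨t, ht, hL.isClosed.frontier_eq ▸ ⟨htL, ?_⟩⟩
  rw [← Set.mem_compl_iff, ← closure_compl]
  refine mem_closure_of_tendsto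
    (hray.tendsto t |>.mono_left (nhdsWithin_le_nhds (s := Set.Ioi t))) ?_
  filter_upwards [self_mem_nhdsWithin] with s (hs : t < s) hsL
  exact hs.not_ge (htmax ⟨ht.trans hs.le, hsL⟩)

theorem Convex.closedBall_combo_subset {C : Set F} (hC : Convex ℝ C) {y x₀ : F} {s a b : ℝ}
    (hy : y ∈ C) (hball : closedBall x₀ s ⊆ C) (hs : 0 ≤ s) (ha : 0 ≤ a) (hb : 0 ≤ b)
    (hab : a + b = 1) :
    closedBall (a • y + b • x₀) (b * s) ⊆ C := calc
  closedBall (a • y + b • x₀) (b * s) = a • {y} + b • closedBall x₀ s := by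
    rw [Set.smul_set_singleton, smul_closedBall b x₀ hs, singleton_add_closedBall,
      Real.norm_of_nonneg hb]
  _ ⊆ a • C + b • C := by gcongr; exact Set.singleton_subset_iff.2 hy
  _ ⊆ C := hC.set_combo_subset ha hb hab

theorem subset_image_homothety_of_forall_exists_dist_le {K C : Set F} (hC : Convex ℝ C)
    {x₀ : F} {s δ : ℝ} (hs : 0 < s) (hδ : 0 ≤ δ) (hball : closedBall x₀ s ⊆ C)
    (happrox : ∀ x ∈ K, ∃ y ∈ C, dist x y ≤ δ) :
    K ⊆ homothety x₀ ((s + δ) / s) '' C := by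
  intro x hx
  obtain ⟨y, hy, hxy⟩ := happrox x hx
  set c := s / (s + δ)
  have hc : 0 ≤ c := by positivity
  refine ⟨homothety x₀ c x, hC.closedBall_combo_subset hy hball hs.le hc (b := 1 - c) ?_
    (by ring) ?_, ?_⟩
  · rw [sub_nonneg, div_le_one (by positivity)]
    linarith
  · have hcδ : c * δ = (1 - c) * s := by
      have : c * (s + δ) = s := div_mul_cancel₀ _ (by positivity)
      linarith
    rw [mem_closedBall, homothety_apply, vsub_eq_sub, vadd_eq_add, dist_eq_norm,
      show c • (x - x₀) + x₀ - (c • y + (1 - c) • x₀) = c • (x - y) by module, norm_smul,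
      Real.norm_of_nonneg hc, ← dist_eq_norm, ← hcδ]
    gcongr
  · rw [← homothety_mul_apply, div_mul_div_cancel₀ (by positivity), div_self (by positivity),
      homothety_one, id_apply]

theorem hausdorffMeasure_frontier_image_homothety [MeasurableSpace F] [BorelSpace F] {d : ℝ}
    (hd : 0 ≤ d) (x₀ : F) {c : ℝ} (hc : c ≠ 0) (A : Set F) :
    μH[d] (frontier (homothety x₀ c '' A)) = ‖c‖₊ ^ d • μH[d] (frontier A) := by
  have hbij : Function.Bijective (homothety x₀ c) := by
    simpa using (AffineEquiv.homothetyUnitsMulHom x₀ (Units.mk0 c hc)).bijective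
  rw [← (IsHomeomorph.mk (homothety_continuous x₀ c) (homothety_isOpenMap x₀ c hc)
    hbij).image_frontier, hausdorffMeasure_homothety_image hd x₀ hc]

end NormedSpace

section InnerProductSpace

variable {E : Type*} [NormedAddCommGroup E] [InnerProductSpace ℝ E]

theorem norm_sub_le_norm_sub_of_inner_nonpos {u₁ u₂ v₁ v₂ : E}
    (h₁ : ⟪u₁ - v₁, v₂ - v₁⟫ ≤ 0) (h₂ : ⟪u₂ - v₂, v₁ - v₂⟫ ≤ 0) : ‖v₁ - v₂‖ ≤ ‖u₁ - u₂‖ := by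
  have key : ‖v₁ - v₂‖ * ‖v₁ - v₂‖ ≤ ‖u₁ - u₂‖ * ‖v₁ - v₂‖ := calc
    ‖v₁ - v₂‖ * ‖v₁ - v₂‖ = ⟪v₁ - v₂, v₁ - v₂⟫ := (real_inner_self_eq_norm_mul_norm _).symm
    _ ≤ ⟪u₁ - u₂, v₁ - v₂⟫ := by
      have : ⟪u₁ - u₂, v₁ - v₂⟫ - ⟪v₁ - v₂, v₁ - v₂⟫
          = -⟪u₁ - v₁, v₂ - v₁⟫ - ⟪u₂ - v₂, v₁ - v₂⟫ := by
        simp only [inner_sub_left, inner_sub_right, real_inner_comm]; ring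
      linarith
    _ ≤ ‖u₁ - u₂‖ * ‖v₁ - v₂‖ := real_inner_le_norm _ _
  rcases (norm_nonneg (v₁ - v₂)).eq_or_lt with h | h
  · rw [← h]; exact norm_nonneg _
  · exact le_of_mul_le_mul_right key h

theorem IsComplete.exists_lipschitzWith_one_nearestPoint {K : Set E} (hK : IsComplete K)
    (hconv : Convex ℝ K) (hne : K.Nonempty) :
    ∃ P : E → E, LipschitzWith 1 P ∧ ∀ u, P u ∈ K ∧ ∀ w ∈ K, ⟪u - P u, w - P u⟫ ≤ 0 := by
  have hnear (u : E) : ∃ v ∈ K, ∀ w ∈ K, ⟪u - v, w - v⟫ ≤ 0 := by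
    obtain ⟨v, hv, hmin⟩ := exists_norm_eq_iInf_of_complete_convex hne hK hconv u
    exact ⟨v, hv, (norm_eq_iInf_iff_real_inner_le_zero hconv hv).1 hmin⟩
  choose P hPK hP using hnear
  refine ⟨P, LipschitzWith.of_dist_le_mul fun u₁ u₂ => ?_, fun u => ⟨hPK u, hP u⟩⟩
  simpa [dist_eq_norm] using
    norm_sub_le_norm_sub_of_inner_nonpos (hP u₁ _ (hPK u₂)) (hP u₂ _ (hPK u₁))

theorem Convex.exists_inner_lt_of_notMem [CompleteSpace E] {C : Set E} (hC : Convex ℝ C)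
    (hCcl : IsClosed C) (hne : C.Nonempty) {z : E} (hz : z ∉ C) :
    ∃ ν : E, ‖ν‖ = 1 ∧ ∀ w ∈ C, ⟪ν, w⟫ < ⟪ν, z⟫ := by
  obtain ⟨P, -, hP⟩ := hCcl.isComplete.exists_lipschitzWith_one_nearestPoint hC hne
  obtain ⟨hPz, hPz_var⟩ := hP z
  have hν : 0 < ‖z - P z‖ := norm_pos_iff.2 (sub_ne_zero.2 fun h => hz (h ▸ hPz))
  refine ⟨‖z - P z‖⁻¹ • (z - P z), by simp [norm_smul, hν.ne'], fun w hw => ?_⟩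
  rw [real_inner_smul_left, real_inner_smul_left]
  refine mul_lt_mul_of_pos_left ?_ (inv_pos.2 hν)
  have h₁ := hPz_var w hw
  have h₂ : 0 < ⟪z - P z, z - P z⟫ := real_inner_self_pos.2 (norm_pos_iff.1 hν)
  rw [inner_sub_right] at h₁ h₂
  linarith

theorem Convex.exists_inner_sub_nonpos_of_mem_frontier [CompleteSpace E] {K : Set E}
    (hK : Convex ℝ K) (hint : (interior K).Nonempty) {x : E} (hx : x ∈ frontier K) :
    ∃ ν : E, ν ≠ 0 ∧ ∀ z ∈ K, ⟪ν, z - x⟫ ≤ 0 := by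
  obtain ⟨f, hf⟩ := geometric_hahn_banach_open_point hK.interior isOpen_interior hx.2
  have hfK : K ⊆ {z | f z ≤ f x} := calc
    K ⊆ closure (interior K) := hK.closure_interior_eq_closure_of_nonempty_interior hint ▸
      subset_closure
    _ ⊆ {z | f z ≤ f x} := closure_minimal (fun a ha => (hf a ha).le)
      (isClosed_le f.continuous continuous_const)
  refine ⟨(InnerProductSpace.toDual ℝ E).symm f, fun h0 => ?_, fun z hz => ?_⟩
  · obtain ⟨a, ha⟩ := hint
    have hf0 : f = 0 := by simpa using congrArg (InnerProductSpace.toDual ℝ E) h0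
    simpa [hf0] using hf a ha
  · rw [InnerProductSpace.toDual_symm_apply, map_sub, sub_nonpos]
    exact hfK hz

theorem closedBall_sub_subset_of_forall_exists_dist_le [CompleteSpace E] {C : Set E}
    (hC : Convex ℝ C) (hCcl : IsClosed C) (hne : C.Nonempty) {x₀ : E} {r δ : ℝ} (hδ : 0 ≤ δ)
    (happrox : ∀ x ∈ closedBall x₀ r, ∃ y ∈ C, dist x y ≤ δ) : closedBall x₀ (r - δ) ⊆ C := by
  intro z hz
  by_contra hzC
  obtain ⟨ν, hν, hsep⟩ := hC.exists_inner_lt_of_notMem hCcl hne hzC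
  have hzx₀ : ‖z - x₀‖ ≤ r - δ := by rwa [← dist_eq_norm, ← mem_closedBall]
  obtain ⟨y, hy, hpy⟩ := happrox (x₀ + r • ν) (by
    rw [mem_closedBall, dist_eq_norm, add_sub_cancel_left, norm_smul, hν, mul_one,
      Real.norm_of_nonneg (by linarith [norm_nonneg (z - x₀)])])
  have hz_le : ⟪ν, z⟫ ≤ ⟪ν, x₀⟫ + (r - δ) := by
    have := real_inner_le_norm ν (z - x₀)
    rw [hν, one_mul, inner_sub_right] at this
    linarith
  have hy_ge : ⟪ν, x₀⟫ + r - δ ≤ ⟪ν, y⟫ := by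
    have := real_inner_le_norm ν (x₀ + r • ν - y)
    rw [hν, one_mul, ← dist_eq_norm, inner_sub_right, inner_add_right, real_inner_smul_right,
      real_inner_self_eq_norm_sq, hν] at this
    linarith
  linarith [hsep y hy]

theorem hausdorffMeasure_frontier_le_of_subset [CompleteSpace E] [MeasurableSpace E]
    [BorelSpace E] {d : ℝ} (hd : 0 ≤ d) {K L : Set E} (hK : Convex ℝ K) (hKcl : IsClosed K)
    (hKint : (interior K).Nonempty) (hL : IsCompact L) (hKL : K ⊆ L) :
    μH[d] (frontier K) ≤ μH[d] (frontier L) := by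
  obtain ⟨P, hP, hPK⟩ :=
    hKcl.isComplete.exists_lipschitzWith_one_nearestPoint hK (hKint.mono interior_subset)
  have hsub : frontier K ⊆ P '' frontier L := by
    intro x hx
    have hxK : x ∈ K := hKcl.frontier_subset hx
    obtain ⟨ν, hν, hνK⟩ := hK.exists_inner_sub_nonpos_of_mem_frontier hKint hx
    obtain ⟨t, ht, hy⟩ := hL.exists_add_smul_mem_frontier (hKL hxK) hν
    refine ⟨x + t • ν, hy, ?_⟩
    have hx_var : ⟪x + t • ν - x, P (x + t • ν) - x⟫ ≤ 0 := by
      rw [add_sub_cancel_left, real_inner_smul_left]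
      exact mul_nonpos_of_nonneg_of_nonpos ht (hνK _ (hPK _).1)
    simpa [sub_eq_zero] using norm_sub_le_norm_sub_of_inner_nonpos ((hPK _).2 x hxK) hx_var
  calc μH[d] (frontier K) ≤ μH[d] (P '' frontier L) := measure_mono hsub
    _ ≤ μH[d] (frontier L) := by simpa using hP.hausdorffMeasure_image_le hd (frontier L)

theorem hausdorffMeasure_frontier_le_smul_of_subset_image_homothety [CompleteSpace E]
    [MeasurableSpace E] [BorelSpace E] {d : ℝ} (hd : 0 ≤ d) {K L : Set E} (hK : Convex ℝ K)
    (hKcl : IsClosed K) (hKint : (interior K).Nonempty) (hL : IsCompact L) {x₀ : E} {c : ℝ}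
    (hc : c ≠ 0) (hKL : K ⊆ homothety x₀ c '' L) :
    μH[d] (frontier K) ≤ ‖c‖₊ ^ d • μH[d] (frontier L) := by
  rw [← hausdorffMeasure_frontier_image_homothety hd x₀ hc]
  exact hausdorffMeasure_frontier_le_of_subset hd hK hKcl hKint
    (hL.image (homothety_continuous x₀ c)) hKL

section ConvexBodies

variable [CompleteSpace E] [MeasurableSpace E] [BorelSpace E] {d : ℝ} {K L : Set E} {x₀ : E}
  {r : ℝ}

theorem hausdorffMeasure_frontier_le_smul_add_hausdorffDist (hd : 0 ≤ d) (hK : IsCompact K)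
    (hK_conv : Convex ℝ K) (hr : 0 < r) (hball : closedBall x₀ r ⊆ K) (hL : IsCompact L)
    (hL_conv : Convex ℝ L) (hL_int : (interior L).Nonempty) :
    μH[d] (frontier L) ≤ ‖(r + hausdorffDist L K) / r‖₊ ^ d • μH[d] (frontier K) := by
  have hδ : 0 ≤ hausdorffDist L K := hausdorffDist_nonneg
  have hLK := subset_image_homothety_of_forall_exists_dist_le hK_conv hr hδ hball fun x hx =>
    exists_dist_le_hausdorffDist_of_mem hL.isBounded hK ⟨x₀, hball (mem_closedBall_self hr.le)⟩ hx
  exact hausdorffMeasure_frontier_le_smul_of_subset_image_homothety hd hL_conv hL.isClosed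
    hL_int hK (div_pos (by linarith) hr).ne' hLK

theorem hausdorffMeasure_frontier_le_smul_sub_hausdorffDist (hd : 0 ≤ d) (hK : IsCompact K)
    (hK_conv : Convex ℝ K) (hball : closedBall x₀ r ⊆ K) (hL : IsCompact L)
    (hL_conv : Convex ℝ L) (hL_ne : L.Nonempty) (hδr : hausdorffDist L K < r) :
    μH[d] (frontier K) ≤ ‖r / (r - hausdorffDist L K)‖₊ ^ d • μH[d] (frontier L) := by
  have hδ : 0 ≤ hausdorffDist L K := hausdorffDist_nonneg
  have hr : 0 < r := hδ.trans_lt hδr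
  have near_L (x : E) (hx : x ∈ K) : ∃ y ∈ L, dist x y ≤ hausdorffDist L K := by
    simpa only [hausdorffDist_comm] using
      exists_dist_le_hausdorffDist_of_mem hK.isBounded hL hL_ne hx
  have hball_L : closedBall x₀ (r - hausdorffDist L K) ⊆ L :=
    closedBall_sub_subset_of_forall_exists_dist_le hL_conv hL.isClosed hL_ne hδ
      fun x hx => near_L x (hball hx)
  have hKL := subset_image_homothety_of_forall_exists_dist_le hL_conv (sub_pos.2 hδr) hδ
    hball_L near_L
  rw [sub_add_cancel] at hKL
  exact hausdorffMeasure_frontier_le_smul_of_subset_image_homothety hd hK_conv hK.isClosed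
    ⟨x₀, interior_mono hball (mem_interior_iff_mem_nhds.2 (closedBall_mem_nhds x₀ hr))⟩ hL
    (div_pos hr (sub_pos.2 hδr)).ne' hKL

end ConvexBodies

end InnerProductSpace

/-- Continuity of surface area (the `(n-1)`-dimensional Hausdorff measure of the
boundary) on compact convex bodies in `ℝⁿ` with respect to Hausdorff distance. -/
theorem surfaceArea_continuous_of_hausdorffDist_tendsto_zero
    (n : ℕ) (hn : 2 ≤ n)
    (K : Set (EuclideanSpace ℝ (Fin n))) (Ki : ℕ → Set (EuclideanSpace ℝ (Fin n)))
    (hK_cpt : IsCompact K) (hK_conv : Convex ℝ K) (hK_int : (interior K).Nonempty)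
    (hKi_cpt : ∀ i, IsCompact (Ki i)) (hKi_conv : ∀ i, Convex ℝ (Ki i))
    (hKi_int : ∀ i, (interior (Ki i)).Nonempty)
    (hconv : Tendsto (fun i => hausdorffDist (Ki i) K) atTop (nhds 0)) :
    Tendsto (fun i => μH[(n : ℝ) - 1] (frontier (Ki i))) atTop
      (nhds (μH[(n : ℝ) - 1] (frontier K))) := by
  have hd : (0 : ℝ) ≤ n - 1 := by
    have : (2 : ℝ) ≤ n := by exact_mod_cast hn
    linarith
  obtain ⟨x₀, hx₀⟩ := hK_int
  obtain ⟨r, hr, hball⟩ := nhds_basis_closedBall.mem_iff.1 (mem_interior_iff_mem_nhds.1 hx₀)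
  have hlower_ratio : Tendsto (fun i => r / (r - hausdorffDist (Ki i) K)) atTop (𝓝 1) := by
    simpa [hr.ne', Pi.div_def] using (tendsto_const_nhds (x := r)).div
      (tendsto_const_nhds (x := r) |>.sub hconv) (by simpa using hr.ne')
  have hupper_ratio : Tendsto (fun i => (r + hausdorffDist (Ki i) K) / r) atTop (𝓝 1) := by
    simpa [hr.ne'] using (tendsto_const_nhds (x := r) |>.add hconv).div_const r
  refine ENNReal.tendsto_of_le_smul_of_le_smul (hlower_ratio.nnnorm_rpow_of_tendsto_one hd)
    (hupper_ratio.nnnorm_rpow_of_tendsto_one hd) ?_ (.of_forall fun i => ?_)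
  · filter_upwards [hconv.eventually_lt_const hr] with i hi
    exact hausdorffMeasure_frontier_le_smul_sub_hausdorffDist hd hK_cpt hK_conv hball
      (hKi_cpt i) (hKi_conv i) ((hKi_int i).mono interior_subset) hi
  · exact hausdorffMeasure_frontier_le_smul_add_hausdorffDist hd hK_cpt hK_conv hr hball
      (hKi_cpt i) (hKi_conv i) (hKi_int i)
end

section
/- Let E = EuclideanSpace ℝ n, let s, Ω ⊆ E be nonempty sets, let L, δ > 0 with L·δ < 1, and let f : E → E satisfy: f is Lipschitz on s with constant L, ‖f x‖ = 1 for every x ∈ s, and every point p ∈ Ω admits a point q ∈ s with dist(p, q) ≤ δ. Then there exists g : E → E such that g is Lipschitz on Ω with constant 2L/(1 − L·δ), ‖g x‖ = 1 for every x ∈ Ω, and g x = f x for every x ∈ s ∩ Ω. -/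
/-!
Kirszbraun's theorem extends `f` from `s` to an `L`-Lipschitz map `w` on the whole space. For one
new point `x` and finitely many `aᵢ ∈ s`, minimise `y ↦ maxᵢ (‖y - f aᵢ‖² - L²‖x - aᵢ‖²)`: the
minimiser is a convex combination `∑ λᵢ f aᵢ` of the active values, and the identity
`∑ᵢⱼ λᵢλⱼ‖uᵢ - uⱼ‖² = 2 (∑ᵢ λᵢ‖uᵢ‖² - ‖∑ᵢ λᵢuᵢ‖²)` turns the Lipschitz bound on `f` into the
bound `≤ 0` for the minimum. Compactness of closed balls passes to all of `s`, induction to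
finitely many new points, and Tychonoff's theorem to the whole space.

Every `p ∈ Ω` lies within `δ` of a point where `‖w‖ = 1`, so `‖w p‖ ≥ 1 - Lδ > 0`, and
`x ↦ ‖x‖⁻¹ • x` is `2/c`-Lipschitz on `{c ≤ ‖x‖}`; hence `g = ‖w‖⁻¹ • w`.
-/

open Metric Set Filter Topology

theorem exists_minimax_norm_sub_sq {F : Type*} [NormedAddCommGroup F] [ProperSpace F] {ι : Type*}
    [Fintype ι] [Nonempty ι] (c : ι → F) (r : ι → ℝ) :
    ∃ y₀ m, (∀ i, ‖y₀ - c i‖ ^ 2 - r i ≤ m) ∧ ∀ y, ∃ i, m ≤ ‖y - c i‖ ^ 2 - r i := by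
  set φ : F → ℝ := fun y => Finset.univ.sup' Finset.univ_nonempty fun i => ‖y - c i‖ ^ 2 - r i
  have hφ : Continuous φ := Continuous.finset_sup'_apply _ fun i _ => by fun_prop
  have hlim : Tendsto φ (cocompact F) atTop := by
    let i₀ := Classical.arbitrary ι
    refine tendsto_atTop_mono (fun y => Finset.le_sup' _ (Finset.mem_univ i₀)) ?_
    simp only [sub_eq_add_neg _ (r i₀), ← dist_eq_norm]
    exact tendsto_atTop_add_const_right _ _
      ((tendsto_pow_atTop two_ne_zero).comp (tendsto_dist_right_cocompact_atTop (c i₀)))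
  obtain ⟨y₀, hy₀⟩ := hφ.exists_forall_le hlim
  refine ⟨y₀, φ y₀, fun i => Finset.le_sup' (fun i => ‖y₀ - c i‖ ^ 2 - r i) (Finset.mem_univ i),
    fun y => ?_⟩
  obtain ⟨i, -, hi⟩ := Finset.exists_mem_eq_sup' Finset.univ_nonempty
    fun i => ‖y - c i‖ ^ 2 - r i
  exact ⟨i, (hy₀ y).trans hi.le⟩

theorem LipschitzOnWith.update_insert {α β : Type*} [PseudoMetricSpace α] [PseudoMetricSpace β]
    [DecidableEq α] {K : NNReal} {f : α → β} {s : Set α} (hf : LipschitzOnWith K f s) {x : α}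
    {y : β} (hy : ∀ a ∈ s, dist y (f a) ≤ K * dist x a) :
    LipschitzOnWith K (Function.update f x y) (insert x s) := by
  refine LipschitzOnWith.of_dist_le_mul fun a ha b hb => ?_
  rcases eq_or_ne a x with rfl | hax
  · rcases eq_or_ne b a with rfl | hbx
    · simp
    rw [Function.update_self, Function.update_of_ne hbx]
    exact hy b (hb.resolve_left hbx)
  rcases eq_or_ne b x with rfl | hbx
  · rw [Function.update_self, Function.update_of_ne hax, dist_comm, dist_comm a]
    exact hy a (ha.resolve_left hax)
  rw [Function.update_of_ne hax, Function.update_of_ne hbx]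
  exact hf.dist_le_mul a (ha.resolve_left hax) b (hb.resolve_left hbx)

section

variable {E F : Type*} [NormedAddCommGroup E] [InnerProductSpace ℝ E]
  [NormedAddCommGroup F] [InnerProductSpace ℝ F]

theorem sum_sum_mul_norm_sub_sq {ι : Type*} (t : Finset ι) {w : ι → ℝ} (hw : ∑ i ∈ t, w i = 1)
    (u : ι → F) :
    ∑ i ∈ t, ∑ j ∈ t, w i * w j * ‖u i - u j‖ ^ 2 =
      2 * (∑ i ∈ t, w i * ‖u i‖ ^ 2 - ‖∑ i ∈ t, w i • u i‖ ^ 2) := by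
  have hcross : ‖∑ i ∈ t, w i • u i‖ ^ 2 =
      ∑ i ∈ t, ∑ j ∈ t, w i * w j * inner ℝ (u i) (u j) := by
    rw [← real_inner_self_eq_norm_sq, sum_inner]
    refine Finset.sum_congr rfl fun i _ => ?_
    simp only [inner_sum, real_inner_smul_left, real_inner_smul_right]
    exact Finset.sum_congr rfl fun j _ => by ring
  calc ∑ i ∈ t, ∑ j ∈ t, w i * w j * ‖u i - u j‖ ^ 2
      = ∑ i ∈ t, ∑ j ∈ t, (w i * ‖u i‖ ^ 2 * w j + w j * ‖u j‖ ^ 2 * w i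
          - 2 * (w i * w j * inner ℝ (u i) (u j))) :=
        Finset.sum_congr rfl fun i _ => Finset.sum_congr rfl fun j _ => by
          rw [norm_sub_sq_real]; ring
    _ = _ := by
        simp only [Finset.sum_sub_distrib, Finset.sum_add_distrib, ← Finset.sum_mul,
          ← Finset.mul_sum, hcross, hw]
        ring

theorem sum_mul_norm_sq_le_of_sum_smul_eq_zero {ι : Type*} {t : Finset ι} {w : ι → ℝ}
    (hw₀ : ∀ i ∈ t, 0 ≤ w i) (hw₁ : ∑ i ∈ t, w i = 1) {u : ι → F} (hu : ∑ i ∈ t, w i • u i = 0)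
    {p : ι → E} {K : ℝ} (hup : ∀ i ∈ t, ∀ j ∈ t, ‖u i - u j‖ ≤ K * ‖p i - p j‖) :
    ∑ i ∈ t, w i * ‖u i‖ ^ 2 ≤ K ^ 2 * ∑ i ∈ t, w i * ‖p i‖ ^ 2 := by
  have hsq : ∑ i ∈ t, ∑ j ∈ t, w i * w j * ‖u i - u j‖ ^ 2 ≤
      K ^ 2 * ∑ i ∈ t, ∑ j ∈ t, w i * w j * ‖p i - p j‖ ^ 2 := by
    simp only [Finset.mul_sum]
    refine Finset.sum_le_sum fun i hi => Finset.sum_le_sum fun j hj => ?_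
    have := pow_le_pow_left₀ (norm_nonneg _) (hup i hi j hj) 2
    rw [mul_pow] at this
    nlinarith [mul_nonneg (hw₀ i hi) (hw₀ j hj)]
  rw [sum_sum_mul_norm_sub_sq t hw₁, sum_sum_mul_norm_sub_sq t hw₁, hu, norm_zero] at hsq
  nlinarith [sq_nonneg K, sq_nonneg ‖∑ i ∈ t, w i • p i‖]

theorem mem_convexHull_of_minimax [CompleteSpace F] {ι : Type*} [Finite ι]
    (c : ι → F) (r : ι → ℝ) {y₀ : F} {m : ℝ} (hle : ∀ i, ‖y₀ - c i‖ ^ 2 - r i ≤ m)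
    (hmin : ∀ y, ∃ i, m ≤ ‖y - c i‖ ^ 2 - r i) :
    y₀ ∈ convexHull ℝ (c '' {i | ‖y₀ - c i‖ ^ 2 - r i = m}) := by
  set A := {i | ‖y₀ - c i‖ ^ 2 - r i = m}
  by_contra hy₀
  obtain ⟨φ, u, hφy₀, hφA⟩ := geometric_hahn_banach_point_closed (convex_convexHull ℝ _)
    (((Set.toFinite A).image c).isClosed_convexHull ℝ) hy₀
  set v := (InnerProductSpace.toDual ℝ F).symm φ
  have hv : ∀ i ∈ A, 0 < 2 * inner ℝ v (c i - y₀) := by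
    intro i hi
    have := hφA _ (subset_convexHull ℝ _ (mem_image_of_mem c hi))
    rw [inner_sub_right, InnerProductSpace.toDual_symm_apply, InnerProductSpace.toDual_symm_apply]
    linarith
  have hexpand : ∀ (τ : ℝ) i, ‖y₀ + τ • v - c i‖ ^ 2 - r i =
      ‖y₀ - c i‖ ^ 2 - r i - τ * (2 * inner ℝ v (c i - y₀) - τ * ‖v‖ ^ 2) := by
    intro τ i
    rw [show y₀ + τ • v - c i = (y₀ - c i) + τ • v by abel, norm_add_sq_real, norm_smul,
      inner_smul_right, real_inner_comm, ← neg_sub (c i) y₀, inner_neg_right, mul_pow,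
      Real.norm_eq_abs, sq_abs]
    ring
  -- Moving from `y₀` towards `v` lowers the active terms to first order, while the inactive
  -- ones stay below `m` by continuity.
  have hdescent : ∀ᶠ τ in 𝓝[>] (0 : ℝ), ∀ i, ‖y₀ + τ • v - c i‖ ^ 2 - r i < m := by
    refine eventually_all.2 fun i => ?_
    by_cases hi : i ∈ A
    · have hslope : ∀ᶠ τ in 𝓝 (0 : ℝ), 0 < 2 * inner ℝ v (c i - y₀) - τ * ‖v‖ ^ 2 :=
        Tendsto.eventually_const_lt (hv i hi) <|
          (by fun_prop : Continuous fun τ : ℝ => 2 * inner ℝ v (c i - y₀) - τ * ‖v‖ ^ 2).tendsto' 0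
            (2 * inner ℝ v (c i - y₀)) (by simp)
      filter_upwards [self_mem_nhdsWithin, nhdsWithin_le_nhds hslope] with τ hτ hpos
      rw [hexpand, hi]
      exact sub_lt_self m (mul_pos hτ hpos)
    · refine nhdsWithin_le_nhds (Tendsto.eventually_lt_const (lt_of_le_of_ne (hle i) hi) ?_)
      exact (by fun_prop : Continuous fun τ : ℝ => ‖y₀ + τ • v - c i‖ ^ 2 - r i).tendsto' 0 _
        (by simp)
  obtain ⟨τ, hτ⟩ := hdescent.exists
  obtain ⟨i, hi⟩ := hmin (y₀ + τ • v)
  exact (hτ i).not_ge hi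

variable [ProperSpace F]

theorem exists_forall_norm_sub_le_mul {ι : Type*} [Finite ι] {K : ℝ} (hK : 0 ≤ K)
    (a : ι → E) (b : ι → F) (hab : ∀ i j, ‖b i - b j‖ ≤ K * ‖a i - a j‖) (x : E) :
    ∃ y, ∀ i, ‖y - b i‖ ≤ K * ‖x - a i‖ := by
  cases isEmpty_or_nonempty ι
  · exact ⟨0, isEmptyElim⟩
  have := Fintype.ofFinite ι
  obtain ⟨y₀, m, hle, hmin⟩ := exists_minimax_norm_sub_sq b fun i => K ^ 2 * ‖x - a i‖ ^ 2
  suffices hm : m ≤ 0 by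
    refine ⟨y₀, fun i => (pow_le_pow_iff_left₀ (norm_nonneg _) (by positivity) two_ne_zero).1 ?_⟩
    linarith [hle i, mul_pow K ‖x - a i‖ 2]
  obtain ⟨κ, _, w, z, hw₀, hw₁, hz, hwz⟩ :=
    mem_convexHull_iff_exists_fintype.1 (mem_convexHull_of_minimax b _ hle hmin)
  choose k hk hkz using hz
  have hactive : ∀ j, ‖y₀ - b (k j)‖ ^ 2 = m + K ^ 2 * ‖x - a (k j)‖ ^ 2 := fun j => by
    linarith [show ‖y₀ - b (k j)‖ ^ 2 - K ^ 2 * ‖x - a (k j)‖ ^ 2 = m from hk j]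
  have hbalance : ∑ j, w j • (y₀ - b (k j)) = 0 := by
    simp only [smul_sub, Finset.sum_sub_distrib, ← Finset.sum_smul, hw₁, one_smul, hkz, hwz,
      sub_self]
  have key := sum_mul_norm_sq_le_of_sum_smul_eq_zero (fun j _ => hw₀ j) hw₁ hbalance
    (p := fun j => x - a (k j)) (K := K) fun i _ j _ => by
      simpa only [sub_sub_sub_cancel_left] using hab (k j) (k i)
  have hsum : ∑ j, w j * ‖y₀ - b (k j)‖ ^ 2 = m + K ^ 2 * ∑ j, w j * ‖x - a (k j)‖ ^ 2 := by
    calc ∑ j, w j * ‖y₀ - b (k j)‖ ^ 2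
        = ∑ j, (w j * m + K ^ 2 * (w j * ‖x - a (k j)‖ ^ 2)) :=
          Finset.sum_congr rfl fun j _ => by rw [hactive]; ring
      _ = _ := by rw [Finset.sum_add_distrib, ← Finset.sum_mul, ← Finset.mul_sum, hw₁, one_mul]
  linarith

variable {K : NNReal} {f : E → F} {s : Set E}

theorem LipschitzOnWith.exists_forall_dist_le (hf : LipschitzOnWith K f s) (x : E) :
    ∃ y, ∀ a ∈ s, dist y (f a) ≤ K * dist x a := by
  rcases s.eq_empty_or_nonempty with rfl | ⟨q, hq⟩
  · exact ⟨0, by simp⟩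
  have hfinite : ∀ u : Finset s, (closedBall (f q) (K * dist x q) ∩
      ⋂ a ∈ u, closedBall (f a) (K * dist x a)).Nonempty := fun u => by
    let pt : Option u → E := fun o => o.elim q fun i => (i : s)
    have hpt : ∀ o, pt o ∈ s := by
      rintro (_ | i)
      exacts [hq, (i : s).2]
    obtain ⟨y, hy⟩ := exists_forall_norm_sub_le_mul K.coe_nonneg pt (fun o => f (pt o))
      (fun i j => by simpa only [dist_eq_norm] using hf.dist_le_mul _ (hpt i) _ (hpt j)) x
    refine ⟨y, by simpa [dist_eq_norm, pt] using hy none, mem_iInter₂.2 fun a ha => ?_⟩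
    simpa [dist_eq_norm, pt] using hy (some ⟨a, ha⟩)
  obtain ⟨y, -, hy⟩ := (isCompact_closedBall (f q) (K * dist x q)).inter_iInter_nonempty _
    (fun _ => isClosed_closedBall) hfinite
  exact ⟨y, fun a ha => mem_iInter.1 hy ⟨a, ha⟩⟩

theorem LipschitzOnWith.exists_lipschitzOnWith_union_finset (hf : LipschitzOnWith K f s)
    (T : Finset E) : ∃ g, LipschitzOnWith K g (s ∪ T) ∧ EqOn f g s := by
  classical
  induction T using Finset.induction_on with
  | empty => exact ⟨f, by simpa using hf, eqOn_refl f s⟩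
  | insert x T _ ih =>
    obtain ⟨g, hg, hfg⟩ := ih
    rw [Finset.coe_insert, union_insert]
    by_cases hx : x ∈ s ∪ T
    · exact ⟨g, by rwa [insert_eq_of_mem hx], hfg⟩
    obtain ⟨y, hy⟩ := hg.exists_forall_dist_le x
    refine ⟨Function.update g x y, hg.update_insert hy, fun a ha => ?_⟩
    rw [Function.update_of_ne (ne_of_mem_of_not_mem (mem_union_left _ ha) hx)]
    exact hfg ha

theorem LipschitzOnWith.kirszbraun (hf : LipschitzOnWith K f s) :
    ∃ g : E → F, LipschitzWith K g ∧ EqOn f g s := by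
  classical
  rcases s.eq_empty_or_nonempty with rfl | ⟨q, hq⟩
  · exact ⟨fun _ => 0, LipschitzWith.const' 0, eqOn_empty _ _⟩
  let C : Finset E → Set (E → F) := fun T =>
    (univ.pi fun p => closedBall (f q) (K * dist p q)) ∩
      {g | LipschitzOnWith K g (s ∪ T) ∧ EqOn f g s}
  have hC_anti : Antitone C := fun T T' hTT' g ⟨hball, hlip, hfg⟩ =>
    ⟨hball, hlip.mono (union_subset_union_right _ (Finset.coe_subset.2 hTT')), hfg⟩
  have hC_nonempty : ∀ T, (C T).Nonempty := fun T => by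
    obtain ⟨g, hg, hfg⟩ := hf.exists_lipschitzOnWith_union_finset T
    refine ⟨(s ∪ T).piecewise g fun _ => f q, fun p _ => ?_, fun a ha b hb => ?_,
      hfg.trans ((piecewise_eqOn _ _ _).symm.mono subset_union_left)⟩
    · by_cases hp : p ∈ s ∪ T
      · rw [mem_closedBall, piecewise_eq_of_mem _ _ _ hp, hfg hq]
        exact hg.dist_le_mul p hp q (mem_union_left _ hq)
      · rw [mem_closedBall, piecewise_eq_of_notMem _ _ _ hp, dist_self]
        positivity
    · simp only [piecewise_eq_of_mem _ _ _ ha, piecewise_eq_of_mem _ _ _ hb]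
      exact hg ha hb
  have hEqOn_closed : IsClosed {g : E → F | EqOn f g s} := by
    simp only [EqOn, ofPred_forall]
    exact isClosed_biInter fun a _ => isClosed_eq continuous_const (continuous_apply a)
  have hC_closed : ∀ T, IsClosed (C T) := fun T =>
    (isClosed_set_pi fun p _ => isClosed_closedBall).inter
      ((isClosed_setOfPred_lipschitzOnWith K _).inter hEqOn_closed)
  obtain ⟨g, hg⟩ := IsCompact.nonempty_iInter_of_directed_nonempty_isCompact_isClosed C
    hC_anti.directed_ge hC_nonempty
    (fun T => (isCompact_univ_pi fun p => isCompact_closedBall _ _).of_isClosed_subset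
      (hC_closed T) inter_subset_left)
    hC_closed
  have hgT : ∀ T : Finset E, LipschitzOnWith K g (s ∪ T) ∧ EqOn f g s := fun T =>
    (mem_iInter.1 hg T).2
  refine ⟨g, LipschitzWith.of_dist_le_mul fun a b => ?_, (hgT ∅).2⟩
  exact (hgT {a, b}).1.dist_le_mul a (by simp) b (by simp)

end

theorem lipschitzOnWith_inv_norm_smul {E : Type*} [NormedAddCommGroup E] [NormedSpace ℝ E]
    {c : NNReal} (hc : 0 < c) :
    LipschitzOnWith (2 / c) (fun x : E => ‖x‖⁻¹ • x) {x | (c : ℝ) ≤ ‖x‖} := by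
  rw [lipschitzOnWith_iff_norm_sub_le]
  intro a (ha : (c : ℝ) ≤ ‖a‖) b (hb : (c : ℝ) ≤ ‖b‖)
  have hc' : (0 : ℝ) < c := hc
  have ha0 : 0 < ‖a‖ := hc'.trans_le ha
  have hb0 : 0 < ‖b‖ := hc'.trans_le hb
  have hsplit : ‖a‖⁻¹ • a - ‖b‖⁻¹ • b = ‖a‖⁻¹ • (a - b) + (‖a‖⁻¹ - ‖b‖⁻¹) • b := by
    rw [smul_sub, sub_smul]; abel
  have hcoef : ‖(‖a‖⁻¹ - ‖b‖⁻¹) • b‖ ≤ ‖a‖⁻¹ * ‖a - b‖ := by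
    rw [norm_smul, Real.norm_eq_abs, inv_sub_inv ha0.ne' hb0.ne', abs_div,
      abs_of_pos (mul_pos ha0 hb0), div_mul_eq_mul_div, mul_div_mul_right _ _ hb0.ne',
      abs_sub_comm, ← div_eq_inv_mul]
    gcongr
    exact abs_norm_sub_norm_le a b
  calc ‖‖a‖⁻¹ • a - ‖b‖⁻¹ • b‖
      ≤ ‖a‖⁻¹ * ‖a - b‖ + ‖a‖⁻¹ * ‖a - b‖ := by
        rw [hsplit]
        refine (norm_add_le _ _).trans (add_le_add ?_ hcoef)
        rw [norm_smul, norm_inv, norm_norm]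
    _ ≤ (c : ℝ)⁻¹ * ‖a - b‖ + (c : ℝ)⁻¹ * ‖a - b‖ := by gcongr
    _ = ↑(2 / c) * ‖a - b‖ := by rw [NNReal.coe_div, NNReal.coe_two]; ring

theorem extension_of_unit_vector_field_general
    (n : ℕ) (s Ω : Set (EuclideanSpace ℝ (Fin n)))
    (L δ : ℝ) (hL : 0 < L) (hLδ : L * δ < 1)
    (f : EuclideanSpace ℝ (Fin n) → EuclideanSpace ℝ (Fin n))
    (hf_lip : LipschitzOnWith (Real.toNNReal L) f s)
    (hf_unit : ∀ x ∈ s, ‖f x‖ = 1)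
    (hnear : ∀ p ∈ Ω, ∃ q ∈ s, dist p q ≤ δ) :
    ∃ g : EuclideanSpace ℝ (Fin n) → EuclideanSpace ℝ (Fin n),
      LipschitzOnWith (Real.toNNReal (2 * L / (1 - L * δ))) g Ω ∧
      (∀ x ∈ Ω, ‖g x‖ = 1) ∧
      (∀ x ∈ s ∩ Ω, g x = f x) := by
  obtain ⟨w, hw_lip, hfw⟩ := hf_lip.kirszbraun
  let c : NNReal := ⟨1 - L * δ, by linarith⟩
  have hc : (0 : ℝ) < 1 - L * δ := by linarith
  have hw_norm : ∀ p ∈ Ω, 1 - L * δ ≤ ‖w p‖ := fun p hp => by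
    obtain ⟨q, hq, hpq⟩ := hnear p hp
    have hwq : ‖w q‖ = 1 := by rw [← hfw hq, hf_unit q hq]
    have hwpq := hw_lip.dist_le_mul q p
    rw [Real.coe_toNNReal _ hL.le, dist_eq_norm, dist_comm] at hwpq
    have := mul_le_mul_of_nonneg_left hpq hL.le
    linarith [norm_sub_norm_le (w q) (w p)]
  refine ⟨fun p => ‖w p‖⁻¹ • w p, ?_, fun p hp => ?_, fun x hx => ?_⟩
  · refine ((lipschitzOnWith_inv_norm_smul (c := c) hc).comp hw_lip.lipschitzOnWith
      hw_norm).weaken ?_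
    rw [← NNReal.coe_le_coe, NNReal.coe_mul, NNReal.coe_div, NNReal.coe_ofNat,
      Real.coe_toNNReal _ hL.le, Real.coe_toNNReal _ (div_nonneg (by positivity) hc.le)]
    change 2 / (1 - L * δ) * L ≤ 2 * L / (1 - L * δ)
    rw [div_mul_eq_mul_div, mul_comm 2 L]
  · exact norm_smul_inv_norm (norm_pos_iff.1 (hc.trans_le (hw_norm p hp)))
  · simp only [← hfw hx.1, hf_unit x hx.1, inv_one, one_smul]

/-- Extension of Lipschitz unit vector fields (Euclidean model of Lemma 3.2): a unit
vector field that is `L`-Lipschitz on `s` extends to a `2L/(1 - Lδ)`-Lipschitz unit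
vector field on any set `Ω` all of whose points lie within distance `δ < 1/L` of `s`. -/
theorem extension_of_unit_vector_field
    (n : ℕ) (s Ω : Set (EuclideanSpace ℝ (Fin n)))
    (hs : s.Nonempty) (hΩ : Ω.Nonempty)
    (L δ : ℝ) (hL : 0 < L) (hδ : 0 < δ) (hLδ : L * δ < 1)
    (f : EuclideanSpace ℝ (Fin n) → EuclideanSpace ℝ (Fin n))
    (hf_lip : LipschitzOnWith (Real.toNNReal L) f s)
    (hf_unit : ∀ x ∈ s, ‖f x‖ = 1)
    (hnear : ∀ p ∈ Ω, ∃ q ∈ s, dist p q ≤ δ) :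
    ∃ g : EuclideanSpace ℝ (Fin n) → EuclideanSpace ℝ (Fin n),
      LipschitzOnWith (Real.toNNReal (2 * L / (1 - L * δ))) g Ω ∧
      (∀ x ∈ Ω, ‖g x‖ = 1) ∧
      (∀ x ∈ s ∩ Ω, g x = f x) :=
  extension_of_unit_vector_field_general n s Ω L δ hL hLδ f hf_lip hf_unit hnear
end

section
/- Let n ≥ 2, let K ⊆ ℝⁿ be a compact convex set with nonempty interior, and let ε > 0. Set Γ^ε := frontier (cthickening ε K), the boundary of the outer parallel body of K at distance ε. Then every point x ∈ ℝⁿ with infDist(x, Γ^ε) < ε has a unique nearest point in Γ^ε: there exists a unique y ∈ Γ^ε with dist(x, y) = infDist(x, Γ^ε). -/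
/-!
For compact convex `K`, every `x` has a unique nearest point `q` in `K`, and `q` remains the nearest
point of every point on the ray from `q` through `x`. Hence `Γ^ε = frontier (cthickening ε K)` is
the level set `{z | infDist z K = ε}`, `infDist x Γ^ε = |infDist x K - ε|`, and this distance is
attained at the point of that ray at distance `ε` from `q`. It is attained nowhere else: any such
`z` is also at distance `ε` from `q`, so `q`, `x`, `z` give an equality case of the triangle
inequality, which in a strictly convex space puts `z` on the ray.
-/

open AffineMap Metric Set

open scoped RealInnerProductSpace

theorem abs_infDist_sub_infDist_le {α : Type*} [PseudoMetricSpace α] (K : Set α) (x z : α) :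
    |infDist x K - infDist z K| ≤ dist x z := by
  simpa [Real.dist_eq] using (lipschitz_infDist_pt K).dist_le_mul x z

theorem infDist_le_of_mem_cthickening {α : Type*} [PseudoMetricSpace α] {K : Set α} {x : α}
    {ε : ℝ} (hε : 0 ≤ ε) (hx : x ∈ cthickening ε K) : infDist x K ≤ ε :=
  ENNReal.toReal_le_of_le_ofReal hε (mem_cthickening_iff.1 hx)

theorem Bornology.IsBounded.nonempty_frontier_cthickening {E : Type*} [NormedAddCommGroup E]
    [NormedSpace ℝ E] [Nontrivial E] {K : Set E} (hK : Bornology.IsBounded K) (hne : K.Nonempty)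
    (δ : ℝ) : (frontier (Metric.cthickening δ K)).Nonempty :=
  nonempty_frontier_iff.2 ⟨hne.mono (self_subset_cthickening K),
    fun h => NormedSpace.unbounded_univ ℝ E (h ▸ hK.cthickening)⟩

section StrictConvex

variable {V P : Type*} [NormedAddCommGroup V] [NormedSpace ℝ V] [StrictConvexSpace ℝ V]
  [MetricSpace P] [NormedAddTorsor V P]

theorem eq_lineMap_of_dist_eq_abs_sub {p x z : P} (hpx : p ≠ x)
    (h : dist x z = |dist p x - dist p z|) : z = lineMap p x (dist p z / dist p x) := by
  have ha : 0 < dist p x := dist_pos.2 hpx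
  rcases le_or_gt (dist p z) (dist p x) with hle | hlt
  · rw [abs_of_nonneg (sub_nonneg.2 hle)] at h
    apply eq_lineMap_of_dist_eq_mul_of_dist_eq_mul
    · field_simp
    · rw [dist_comm, h]
      field_simp
  · rw [abs_of_neg (sub_neg.2 hlt)] at h
    have hb : 0 < dist p z := ha.trans hlt
    have hx : x = lineMap p z (dist p x / dist p z) := by
      apply eq_lineMap_of_dist_eq_mul_of_dist_eq_mul
      · field_simp
      · rw [h]
        field_simp
        ring
    calc z = lineMap p z (dist p z / dist p x * (dist p x / dist p z)) := by
          rw [div_mul_div_cancel₀ ha.ne', div_self hb.ne', lineMap_apply_one]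
      _ = lineMap p x (dist p z / dist p x) := by rw [← lineMap_lineMap_right, ← hx]

end StrictConvex

namespace Convex

variable {E : Type*} [NormedAddCommGroup E] [InnerProductSpace ℝ E] {K : Set E} {x p q z : E}
  {ε : ℝ}

theorem infDist_eq_dist_iff_inner_nonpos (hK : Convex ℝ K) (hq : q ∈ K) :
    infDist x K = dist x q ↔ ∀ k ∈ K, ⟪x - q, k - q⟫ ≤ 0 := by
  rw [← norm_eq_iInf_iff_real_inner_le_zero hK hq, infDist_eq_iInf, eq_comm]
  simp only [dist_eq_norm]

theorem eq_of_infDist_eq_dist (hK : Convex ℝ K) (hp : p ∈ K) (hq : q ∈ K)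
    (hxp : infDist x K = dist x p) (hxq : infDist x K = dist x q) : p = q := by
  have h₁ := (hK.infDist_eq_dist_iff_inner_nonpos hp).1 hxp q hq
  have h₂ := (hK.infDist_eq_dist_iff_inner_nonpos hq).1 hxq p hp
  have hsum : ‖q - p‖ ^ 2 = ⟪x - p, q - p⟫ + ⟪x - q, p - q⟫ := by
    rw [← real_inner_self_eq_norm_sq]
    simp only [inner_sub_left, inner_sub_right, real_inner_comm]
    ring
  have : ‖q - p‖ ^ 2 ≤ 0 := by linarith
  have : q - p = 0 := by simpa using this.antisymm (sq_nonneg _)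
  exact (sub_eq_zero.1 this).symm

theorem infDist_lineMap (hK : Convex ℝ K) (hq : q ∈ K) (hxq : infDist x K = dist x q)
    {c : ℝ} (hc : 0 ≤ c) : infDist (lineMap q x c) K = c * dist q x := by
  have hray : infDist (lineMap q x c) K = dist (lineMap q x c) q := by
    rw [hK.infDist_eq_dist_iff_inner_nonpos hq]
    intro k hk
    rw [← vsub_eq_sub, lineMap_vsub_left, vsub_eq_sub, real_inner_smul_left]
    exact mul_nonpos_of_nonneg_of_nonpos hc ((hK.infDist_eq_dist_iff_inner_nonpos hq).1 hxq k hk)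
  rw [hray, dist_lineMap_left, Real.norm_of_nonneg hc]

theorem frontier_cthickening (hK : Convex ℝ K) (hKc : IsCompact K) (hε : 0 < ε) :
    frontier (Metric.cthickening ε K) = {z | infDist z K = ε} := by
  ext z
  refine ⟨fun hz => ?_, fun hz => ?_⟩
  · change (infEDist z K).toReal = ε
    rw [frontier_cthickening_subset K hz, ENNReal.toReal_ofReal hε.le]
  replace hz : infDist z K = ε := hz
  have hKne : K.Nonempty := nonempty_iff_ne_empty.2 fun h => by
    rw [h, infDist_empty] at hz
    exact hε.ne hz
  obtain ⟨q, hq, hzq⟩ := hKc.exists_infDist_eq_dist hKne z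
  rw [frontier_eq_closure_inter_closure, isClosed_cthickening.closure_eq]
  refine ⟨mem_cthickening_of_dist_le z q ε K hq (hzq.symm.trans hz).le, ?_⟩
  have hlim : lineMap q z (1 : ℝ) ∈ closure (lineMap q z '' Ioi (1 : ℝ)) :=
    lineMap_continuous.continuousWithinAt.mem_closure_image (by simp [closure_Ioi])
  rw [lineMap_apply_one] at hlim
  refine closure_mono ?_ hlim
  rintro _ ⟨c, hc, rfl⟩ hmem
  have hfar : infDist (lineMap q z c) K = c * ε := by
    rw [hK.infDist_lineMap hq hzq (zero_le_one.trans hc.le), dist_comm, ← hzq, hz]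
  exact (infDist_le_of_mem_cthickening hε.le hmem).not_gt (hfar ▸ lt_mul_of_one_lt_left hε hc)

theorem dist_eq_of_dist_eq_abs_sub (hK : Convex ℝ K) (hKc : IsCompact K) (hq : q ∈ K)
    (hxq : infDist x K = dist x q) (hz : infDist z K = ε) (hxz : dist x z = |dist x q - ε|) :
    dist q z = ε := by
  rcases le_or_gt (dist x q) ε with hle | hlt
  · rw [abs_of_nonpos (sub_nonpos.2 hle)] at hxz
    refine le_antisymm ?_ (hz ▸ dist_comm z q ▸ infDist_le_dist_of_mem hq)
    calc dist q z ≤ dist q x + dist x z := dist_triangle q x z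
      _ = ε := by rw [hxz, dist_comm]; ring
  · rw [abs_of_pos (sub_pos.2 hlt)] at hxz
    obtain ⟨p, hp, hzp⟩ := hKc.exists_infDist_eq_dist ⟨q, hq⟩ z
    -- `p` is at distance at most `dist x q` from `x`, hence also a nearest point of `x`
    have hxp : infDist x K = dist x p := by
      refine le_antisymm (infDist_le_dist_of_mem hp) ?_
      calc dist x p ≤ dist x z + dist z p := dist_triangle x z p
        _ = infDist x K := by rw [hxz, ← hzp, hz, hxq]; ring
    rw [← hK.eq_of_infDist_eq_dist hp hq hxp hxq, dist_comm, ← hzp, hz]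

theorem eq_lineMap_of_dist_eq_abs_sub (hK : Convex ℝ K) (hKc : IsCompact K) (hq : q ∈ K)
    (hxq : infDist x K = dist x q) (hqx : q ≠ x) (hz : infDist z K = ε)
    (hxz : dist x z = |dist x q - ε|) : z = lineMap q x (ε / dist q x) := by
  have hqz := hK.dist_eq_of_dist_eq_abs_sub hKc hq hxq hz hxz
  rw [dist_comm x q, ← hqz] at hxz
  rw [← hqz]
  exact _root_.eq_lineMap_of_dist_eq_abs_sub hqx hxz

theorem existsUnique_dist_eq_infDist_frontier_cthickening [Nontrivial E] (hK : Convex ℝ K)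
    (hKc : IsCompact K) (hKne : K.Nonempty) (hε : 0 < ε)
    (hx : infDist x (frontier (Metric.cthickening ε K)) < ε) :
    ∃! y, y ∈ frontier (Metric.cthickening ε K) ∧
      dist x y = infDist x (frontier (Metric.cthickening ε K)) := by
  have hne := hKc.isBounded.nonempty_frontier_cthickening hKne ε
  rw [hK.frontier_cthickening hKc hε] at hx hne ⊢
  obtain ⟨q, hq, hxq⟩ := hKc.exists_infDist_eq_dist hKne x
  have hlower : ∀ z ∈ {z | infDist z K = ε}, |dist x q - ε| ≤ dist x z := fun z hz =>
    hxq ▸ hz ▸ abs_infDist_sub_infDist_le K x z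
  have hd : 0 < dist q x := by
    obtain ⟨z₀, hz₀, hxz₀⟩ := (infDist_lt_iff hne).1 hx
    have hε_sub : ε - dist x q < ε := (abs_sub_lt_iff.1 ((hlower z₀ hz₀).trans_lt hxz₀)).2
    rw [dist_comm]
    linarith
  set y := lineMap q x (ε / dist q x)
  have hy : infDist y K = ε := by
    rw [hK.infDist_lineMap hq hxq (by positivity)]
    field_simp
  have hxy : dist x y = |dist x q - ε| := by
    have : (1 - ε / dist q x) * dist q x = dist x q - ε := by field_simp; rw [dist_comm]
    rw [dist_comm, dist_lineMap_right, Real.norm_eq_abs, ← this, abs_mul, abs_of_pos hd]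
  have hdist : infDist x {z | infDist z K = ε} = |dist x q - ε| :=
    le_antisymm (hxy ▸ infDist_le_dist_of_mem hy) ((le_infDist hne).2 hlower)
  refine ⟨y, ⟨hy, hdist ▸ hxy⟩, fun z ⟨hz, hxz⟩ => ?_⟩
  exact hK.eq_lineMap_of_dist_eq_abs_sub hKc hq hxq (dist_pos.1 hd) hz (hdist ▸ hxz)

end Convex

/-- The boundary `Γ^ε` of the outer parallel body of a compact convex body `K ⊆ ℝⁿ`
at distance `ε > 0` has reach at least `ε`: every point at distance less than `ε` from
`Γ^ε` has a unique nearest point in `Γ^ε`. -/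
theorem parallel_hypersurface_unique_nearest_point
    (n : ℕ) (hn : 2 ≤ n)
    (K : Set (EuclideanSpace ℝ (Fin n)))
    (hK_cpt : IsCompact K) (hK_conv : Convex ℝ K) (hK_int : (interior K).Nonempty)
    (ε : ℝ) (hε : 0 < ε)
    (x : EuclideanSpace ℝ (Fin n))
    (hx : infDist x (frontier (cthickening ε K)) < ε) :
    ∃! y, y ∈ frontier (cthickening ε K) ∧
      dist x y = infDist x (frontier (cthickening ε K)) := by
  have : Nonempty (Fin n) := ⟨⟨0, by omega⟩⟩
  exact hK_conv.existsUnique_dist_eq_infDist_frontier_cthickening hK_cpt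
    (hK_int.mono interior_subset) hε hx
end
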